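/- arXiv:1008.5227 — 4 statements merged into one kernel-verified Lean document; each statement's English description precedes it below -/
import Mathlib

section
/- The random dive MH proposal kernel satisfies the identity relating forward and backward densities: for x, y ≠ 0 with |y| < |x|, q(y→x)/q(x→y) = |y|/|x|, where q(x→y) = (1/2)g(y/x)/|x| for |y|<|x| and q(x→y) = (1/2)g(x/y)|x|/y² for |y|>|x|. Consequently the MH acceptance ratio π(y)q(y→x)/(π(x)q(x→y)) equals π(y)|y|/(π(x)|x|) = (π(y)/π(x))·|ε| with ε = y/x. -/
open MeasureTheory Set

/-- The random dive MH proposal kernel density. -/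
noncomputable def rdmhProposal (g : ℝ → ℝ) (x y : ℝ) : ℝ :=
  if |y| < |x| then (1 / 2) * g (y / x) * (1 / |x|)
  else if |x| < |y| then (1 / 2) * g (x / y) * (|x| / y ^ 2)
  else 0

namespace rdmhProposal

variable {g : ℝ → ℝ} {x y : ℝ}

theorem of_abs_lt (h : |y| < |x|) : rdmhProposal g x y = 1 / 2 * g (y / x) * (1 / |x|) := by
  simp [rdmhProposal, h]

theorem swap_of_abs_lt (h : |y| < |x|) :
    rdmhProposal g y x = 1 / 2 * g (y / x) * (|y| / x ^ 2) := by
  simp [rdmhProposal, h, h.not_gt]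

/-- Both directions of a dive use the same scale factor `y / x`, so `g` cancels and only the
Jacobian `|y| / |x|` of the map `ε ↦ ε x` survives. -/
theorem swap_eq_mul_of_abs_lt (h : |y| < |x|) :
    rdmhProposal g y x = |y| / |x| * rdmhProposal g x y := by
  have hx : |x| ≠ 0 := (abs_nonneg y |>.trans_lt h).ne'
  rw [swap_of_abs_lt h, of_abs_lt h, ← sq_abs x]
  field_simp

theorem pos_of_abs_lt (hg_pos : ∀ ε, 0 < |ε| → |ε| < 1 → 0 < g ε) (hy : y ≠ 0)
    (h : |y| < |x|) : 0 < rdmhProposal g x y := by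
  have hx : 0 < |x| := (abs_nonneg y).trans_lt h
  have hε : 0 < g (y / x) := hg_pos _ (by simpa [abs_div] using div_pos (abs_pos.2 hy) hx)
    (by rw [abs_div]; exact (div_lt_one hx).2 h)
  rw [of_abs_lt h]
  positivity

end rdmhProposal

theorem stmt_4_general (g : ℝ → ℝ) (hg_pos : ∀ ε, 0 < |ε| → |ε| < 1 → 0 < g ε)
    (π : ℝ → ℝ)
    (x y : ℝ) (hy : y ≠ 0) (hxy : |y| < |x|) :
    rdmhProposal g y x / rdmhProposal g x y = |y| / |x| ∧
    π y * rdmhProposal g y x / (π x * rdmhProposal g x y)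
      = π y * |y| / (π x * |x|) ∧
    π y * |y| / (π x * |x|) = (π y / π x) * |y / x| := by
  have ratio : rdmhProposal g y x / rdmhProposal g x y = |y| / |x| := by
    rw [rdmhProposal.swap_eq_mul_of_abs_lt hxy,
      mul_div_cancel_right₀ _ (rdmhProposal.pos_of_abs_lt hg_pos hy hxy).ne']
  refine ⟨ratio, ?_, ?_⟩
  · rw [mul_div_mul_comm, ratio, mul_div_mul_comm]
  · rw [abs_div, div_mul_div_comm]

theorem stmt_4 (g : ℝ → ℝ) (hg_pos : ∀ ε, 0 < |ε| → |ε| < 1 → 0 < g ε)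
    (π : ℝ → ℝ) (hπ : ∀ z, 0 < π z)
    (x y : ℝ) (hx : x ≠ 0) (hy : y ≠ 0) (hxy : |y| < |x|) :
    rdmhProposal g y x / rdmhProposal g x y = |y| / |x| ∧
    π y * rdmhProposal g y x / (π x * rdmhProposal g x y)
      = π y * |y| / (π x * |x|) ∧
    π y * |y| / (π x * |x|) = (π y / π x) * |y / x| :=
  stmt_4_general g hg_pos π x y hy hxy
end

section
/- The random dive MH kernel is reversible with respect to π on ℝ\{0}: for all nonzero x,y, π(x) q(x→y) α(x→y) = π(y) q(y→x) α(y→x), where α(x→y) = min{π(y)q(y→x)/(π(x)q(x→y)), 1}. -/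
/-- The Metropolis–Hastings acceptance probability for the RDMH proposal. -/
noncomputable def rdmhAccept (g π : ℝ → ℝ) (x y : ℝ) : ℝ :=
  min (π y * rdmhProposal g y x / (π x * rdmhProposal g x y)) 1

lemma mul_min_div_one {α : Type*} [Field α] [LinearOrder α] [IsStrictOrderedRing α]
    {a b : α} (ha : 0 ≤ a) (hb : 0 ≤ b) : a * min (b / a) 1 = min b a := by
  rcases ha.eq_or_lt with rfl | ha
  · simp [hb]
  · rw [mul_min_of_nonneg _ _ ha.le, mul_div_cancel₀ _ ha.ne', mul_one]

lemma rdmhProposal_nonneg {g : ℝ → ℝ} (hg : ∀ ε, 0 ≤ g ε) (x y : ℝ) :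
    0 ≤ rdmhProposal g x y := by
  unfold rdmhProposal
  split_ifs
  · exact mul_nonneg (mul_nonneg (by norm_num) (hg _)) (by positivity)
  · exact mul_nonneg (mul_nonneg (by norm_num) (hg _)) (by positivity)
  · exact le_rfl

theorem stmt_5_general (g : ℝ → ℝ) (hg_nonneg : ∀ ε, 0 ≤ g ε)
    (π : ℝ → ℝ) (hπ : ∀ z, z ≠ 0 → 0 < π z)
    (x y : ℝ) (hx : x ≠ 0) (hy : y ≠ 0) :
    π x * rdmhProposal g x y * rdmhAccept g π x y
      = π y * rdmhProposal g y x * rdmhAccept g π y x := by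
  have hxy : 0 ≤ π x * rdmhProposal g x y :=
    mul_nonneg (hπ x hx).le (rdmhProposal_nonneg hg_nonneg x y)
  have hyx : 0 ≤ π y * rdmhProposal g y x :=
    mul_nonneg (hπ y hy).le (rdmhProposal_nonneg hg_nonneg y x)
  rw [rdmhAccept, rdmhAccept, mul_min_div_one hxy hyx, mul_min_div_one hyx hxy, min_comm]

theorem stmt_5 (g : ℝ → ℝ) (hg_nonneg : ∀ ε, 0 ≤ g ε)
    (hg_pos : ∀ ε, 0 < |ε| → |ε| < 1 → 0 < g ε)
    (π : ℝ → ℝ) (hπ : ∀ z, z ≠ 0 → 0 < π z)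
    (x y : ℝ) (hx : x ≠ 0) (hy : y ≠ 0) :
    π x * rdmhProposal g x y * rdmhAccept g π x y
      = π y * rdmhProposal g y x * rdmhAccept g π y x :=
  stmt_5_general g hg_nonneg π hπ x y hx hy
end

section
/- Drift bound at infinity: let p > 1, let g be a probability density on Y=(-1,1)\{0} with ∫_Y |ε|^{-s} g(ε)dε < ∞ for some s with 0 < s < 1/2 - 1/(2p). Then (1/2)∫_Y |ε|^{ps} g(ε)dε + (1/2)∫_Y |ε|^{p-ps-1} g(ε)dε + (1/2)∫_Y (1 - |ε|^{p-1}) g(ε)dε < 1. -/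
/-! Write `a = |ε|`, `e₁ = p s` and `e₂ = p - p s - 1`, so that `e₁ + e₂ = p - 1`. The three
integrands add up to `(2 - (1 - a ^ e₁) (1 - a ^ e₂)) g`, and the bound on `s` makes both exponents
positive, so on `Y` the subtracted factor is positive wherever `g` is. Since `g` has total mass `1`,
the subtracted integral is positive and half the total is below `1`. -/

open MeasureTheory Set

theorem integral_mul_pos_of_ae_pos {α : Type*} [MeasurableSpace α] {μ : Measure α}
    {f g : α → ℝ} (hf : ∀ᵐ x ∂μ, 0 < f x) (hg : 0 ≤ᵐ[μ] g) (hg_int : Integrable g μ)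
    (hfg : Integrable (fun x => f x * g x) μ) (hg_pos : 0 < ∫ x, g x ∂μ) :
    0 < ∫ x, f x * g x ∂μ := by
  have hfg_nonneg : 0 ≤ᵐ[μ] fun x => f x * g x := by
    filter_upwards [hf, hg] with x hfx hgx using mul_nonneg hfx.le hgx
  rw [integral_pos_iff_support_of_nonneg_ae hg hg_int] at hg_pos
  rw [integral_pos_iff_support_of_nonneg_ae hfg_nonneg hfg]
  refine hg_pos.trans_le (measure_mono_ae ?_)
  filter_upwards [hf] with x hfx hgx using mul_ne_zero hfx.ne' hgx

theorem rpow_add_rpow_add_one_sub_rpow {a : ℝ} (ha : 0 < a) {x y z : ℝ} (hz : z = x + y) :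
    a ^ x + a ^ y + (1 - a ^ z) = 2 - (1 - a ^ x) * (1 - a ^ y) := by
  rw [hz, Real.rpow_add ha]; ring

theorem two_mul_mul_lt_sub_one {p s : ℝ} (hp : 0 < p) (hs : s < 1 / 2 - 1 / (2 * p)) :
    2 * (p * s) < p - 1 := by
  have := mul_lt_mul_of_pos_left hs (by positivity : (0 : ℝ) < 2 * p)
  field_simp at this
  linarith

theorem setIntegral_abs_rpow_add_abs_rpow_add_one_sub {g : ℝ → ℝ} {S : Set ℝ}
    (hS : MeasurableSet S) (hS0 : (0 : ℝ) ∉ S) (hS1 : S ⊆ Icc (-1) 1) (hg : IntegrableOn g S)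
    {x y z : ℝ} (hx : 0 ≤ x) (hy : 0 ≤ y) (hz : z = x + y) :
    (∫ ε in S, |ε| ^ x * g ε) + (∫ ε in S, |ε| ^ y * g ε) + (∫ ε in S, (1 - |ε| ^ z) * g ε) =
      2 * (∫ ε in S, g ε) - ∫ ε in S, (1 - |ε| ^ x) * (1 - |ε| ^ y) * g ε := by
  have hint : ∀ f : ℝ → ℝ, Continuous f → IntegrableOn (fun ε => f ε * g ε) S := fun f hf =>
    IntegrableOn.continuousOn_mul_of_subset hf.continuousOn hg isCompact_Icc hS hS1
  have hz0 : 0 ≤ z := by linarith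
  have hx' := hint (fun ε => |ε| ^ x) (by fun_prop (disch := assumption))
  have hy' := hint (fun ε => |ε| ^ y) (by fun_prop (disch := assumption))
  have hz' := hint (fun ε => 1 - |ε| ^ z) (by fun_prop (disch := assumption))
  have hxy' : IntegrableOn (fun ε => |ε| ^ x * g ε + |ε| ^ y * g ε) S := hx'.add hy'
  rw [← integral_add hx' hy', ← integral_add hxy' hz', ← integral_const_mul,
    ← integral_sub (hg.const_mul 2) (hint _ (by fun_prop (disch := assumption)))]
  refine setIntegral_congr_fun hS fun ε hε => ?_
  have hε0 : 0 < |ε| := abs_pos.2 (ne_of_mem_of_not_mem hε hS0)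
  linear_combination g ε * rpow_add_rpow_add_one_sub_rpow hε0 hz

theorem stmt_12_general (p : ℝ) (hp : 1 < p) (s : ℝ) (hs0 : 0 < s)
    (hs1 : s < 1 / 2 - 1 / (2 * p))
    (g : ℝ → ℝ) (hg_nonneg : ∀ ε, 0 ≤ g ε)
    (hg_int : IntegrableOn g (Ioo (-1 : ℝ) 1 \ {0}))
    (hg_one : ∫ ε in Ioo (-1 : ℝ) 1 \ {0}, g ε = 1) :
    (1 / 2) * (∫ ε in Ioo (-1 : ℝ) 1 \ {0}, |ε| ^ (p * s) * g ε) +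
      (1 / 2) * (∫ ε in Ioo (-1 : ℝ) 1 \ {0}, |ε| ^ (p - p * s - 1) * g ε) +
      (1 / 2) * (∫ ε in Ioo (-1 : ℝ) 1 \ {0}, (1 - |ε| ^ (p - 1)) * g ε) < 1 := by
  set Y := Ioo (-1 : ℝ) 1 \ {0}
  have hY : MeasurableSet Y := measurableSet_Ioo.diff (measurableSet_singleton 0)
  have hY1 : Y ⊆ Icc (-1) 1 := sdiff_subset.trans Ioo_subset_Icc_self
  have he₁ : 0 < p * s := by positivity
  have he₂ : 0 < p - p * s - 1 := by linarith [two_mul_mul_lt_sub_one (by linarith) hs1]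
  have hsum := setIntegral_abs_rpow_add_abs_rpow_add_one_sub hY (by simp [Y]) hY1 hg_int
    he₁.le he₂.le (z := p - 1) (by ring)
  have hF_pos : ∀ ε ∈ Y, 0 < (1 - |ε| ^ (p * s)) * (1 - |ε| ^ (p - p * s - 1)) :=
    fun ε ⟨hε, _⟩ => by
      have h1 : |ε| < 1 := abs_lt.2 hε
      exact mul_pos (sub_pos.2 (Real.rpow_lt_one (abs_nonneg ε) h1 he₁))
        (sub_pos.2 (Real.rpow_lt_one (abs_nonneg ε) h1 he₂))
  have hFg : 0 < ∫ ε in Y, (1 - |ε| ^ (p * s)) * (1 - |ε| ^ (p - p * s - 1)) * g ε :=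
    integral_mul_pos_of_ae_pos ((ae_restrict_mem hY).mono hF_pos) (ae_of_all _ hg_nonneg) hg_int
      (IntegrableOn.continuousOn_mul_of_subset (by fun_prop (disch := linarith)) hg_int
        isCompact_Icc hY hY1)
      (by rw [hg_one]; exact one_pos)
  linarith

theorem stmt_12 (p : ℝ) (hp : 1 < p) (s : ℝ) (hs0 : 0 < s)
    (hs1 : s < 1 / 2 - 1 / (2 * p))
    (g : ℝ → ℝ) (hg_meas : Measurable g) (hg_nonneg : ∀ ε, 0 ≤ g ε)
    (hg_supp : ∀ ε, ε ∉ Ioo (-1 : ℝ) 1 \ {0} → g ε = 0)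
    (hg_int : IntegrableOn g (Ioo (-1 : ℝ) 1 \ {0}))
    (hg_one : ∫ ε in Ioo (-1 : ℝ) 1 \ {0}, g ε = 1)
    (hg_mom : IntegrableOn (fun ε => |ε| ^ (-s) * g ε) (Ioo (-1 : ℝ) 1 \ {0})) :
    (1 / 2) * (∫ ε in Ioo (-1 : ℝ) 1 \ {0}, |ε| ^ (p * s) * g ε) +
      (1 / 2) * (∫ ε in Ioo (-1 : ℝ) 1 \ {0}, |ε| ^ (p - p * s - 1) * g ε) +
      (1 / 2) * (∫ ε in Ioo (-1 : ℝ) 1 \ {0}, (1 - |ε| ^ (p - 1)) * g ε) < 1 :=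
  stmt_12_general p hp s hs0 hs1 g hg_nonneg hg_int hg_one
end

section
/- The density f(x) = exp(x - e^x) on ℝ (the density of log Y where Y ~ Exp(1)) satisfies: for every ε with 0 < ε < 1, f(x)/f(xε) → 0 as x → +∞ and as x → -∞; and for every ε with -1 < ε < 0, f(x)/f(xε) → 0 as x → +∞ but f(x)/f(xε) → +∞ as x → -∞. -/
/-!
The logarithm of `f x / f (x * ε)` is `(1 - ε) x - eˣ + e^{εx}`. As `x → +∞` and `ε < 1`, the term
`-eˣ` dominates both others. As `x → -∞`, both exponentials vanish when `ε > 0`, leaving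
`(1 - ε) x → -∞`; when `ε < 0`, instead `e^{εx} → +∞` dominates.
-/

open Filter Real

/-- The density of `log Y` with `Y ~ Exp(1)`. -/
noncomputable def gumbelTypeDensity (x : ℝ) : ℝ := Real.exp (x - Real.exp x)

open Asymptotics

lemma gumbelTypeDensity_div_mul (x ε : ℝ) :
    gumbelTypeDensity x / gumbelTypeDensity (x * ε) = exp ((1 - ε) * x - exp x + exp (x * ε)) := by
  rw [gumbelTypeDensity, gumbelTypeDensity, ← exp_sub]
  ring_nf

lemma isLittleO_id_exp_mul {l : Filter ℝ} {c : ℝ} (hc : c ≠ 0)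
    (h : Tendsto (fun x => x * c) l atTop) : (fun x => x) =o[l] fun x => exp (x * c) :=
  (((isLittleO_pow_exp_atTop (n := 1)).comp_tendsto h).const_mul_left c⁻¹).congr_left
    fun x => by field_simp; simp

lemma tendsto_log_ratio_atTop {ε : ℝ} (hε : ε < 1) :
    Tendsto (fun x => (1 - ε) * x - exp x + exp (x * ε)) atTop atBot := by
  have hlin : (fun x => (1 - ε) * x) =o[atTop] fun x => exp x := by
    simpa using (isLittleO_pow_exp_atTop (n := 1)).const_mul_left (1 - ε)
  have hexp : (fun x => exp (x * ε)) =o[atTop] fun x => exp x :=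
    isLittleO_exp_comp_exp_comp.2 <| by
      simpa [mul_one_sub] using tendsto_id.atTop_mul_const (sub_pos.2 hε)
  have : (fun x => (1 - ε) * x - exp x + exp (x * ε)) ~[atTop] fun x => -exp x :=
    ((hlin.add hexp).neg_right.add_isEquivalent IsEquivalent.refl).congr_left <|
      .of_forall fun x => by simp only [Pi.add_apply]; ring
  exact this.symm.tendsto_atBot (tendsto_neg_atTop_atBot.comp tendsto_exp_atTop)

lemma tendsto_log_ratio_atBot_of_pos {ε : ℝ} (hε₀ : 0 < ε) (hε₁ : ε < 1) :
    Tendsto (fun x => (1 - ε) * x - exp x + exp (x * ε)) atBot atBot := by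
  have hlin : Tendsto (fun x => (1 - ε) * x) atBot atBot :=
    tendsto_id.const_mul_atBot (sub_pos.2 hε₁)
  have hexp : Tendsto (fun x => exp (x * ε) - exp x) atBot (nhds 0) := by
    simpa using (tendsto_exp_atBot.comp (tendsto_id.atBot_mul_const hε₀)).sub tendsto_exp_atBot
  exact (hlin.atBot_add hexp).congr fun x => by ring

lemma tendsto_log_ratio_atBot_of_neg {ε : ℝ} (hε : ε < 0) :
    Tendsto (fun x => (1 - ε) * x - exp x + exp (x * ε)) atBot atTop := by
  have hεx : Tendsto (fun x => x * ε) atBot atTop := tendsto_id.atBot_mul_const_of_neg hε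
  have hlin : (fun x => (1 - ε) * x) =o[atBot] fun x => exp (x * ε) :=
    (isLittleO_id_exp_mul hε.ne hεx).const_mul_left (1 - ε)
  have hexp : (fun x => exp x) =o[atBot] fun x => exp (x * ε) :=
    isLittleO_exp_comp_exp_comp.2 <| by
      simpa [mul_sub_one] using tendsto_id.atBot_mul_const_of_neg (sub_neg.2 (hε.trans one_pos))
  have : (fun x => (1 - ε) * x - exp x + exp (x * ε)) ~[atBot] fun x => exp (x * ε) :=
    ((hlin.sub hexp).add_isEquivalent IsEquivalent.refl).congr_left <|
      .of_forall fun x => by simp only [Pi.add_apply]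
  exact this.symm.tendsto_atTop (tendsto_exp_atTop.comp hεx)

theorem stmt_15 :
    (∀ ε : ℝ, 0 < ε → ε < 1 →
      Tendsto (fun x : ℝ => gumbelTypeDensity x / gumbelTypeDensity (x * ε))
        atTop (nhds 0) ∧
      Tendsto (fun x : ℝ => gumbelTypeDensity x / gumbelTypeDensity (x * ε))
        atBot (nhds 0)) ∧
    (∀ ε : ℝ, -1 < ε → ε < 0 →
      Tendsto (fun x : ℝ => gumbelTypeDensity x / gumbelTypeDensity (x * ε))
        atTop (nhds 0) ∧
      Tendsto (fun x : ℝ => gumbelTypeDensity x / gumbelTypeDensity (x * ε))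
        atBot atTop) := by
  simp only [gumbelTypeDensity_div_mul]
  refine ⟨fun ε hε₀ hε₁ => ⟨?_, ?_⟩, fun ε _ hε => ⟨?_, ?_⟩⟩
  · exact tendsto_exp_atBot.comp (tendsto_log_ratio_atTop hε₁)
  · exact tendsto_exp_atBot.comp (tendsto_log_ratio_atBot_of_pos hε₀ hε₁)
  · exact tendsto_exp_atBot.comp (tendsto_log_ratio_atTop (hε.trans one_pos))
  · exact tendsto_exp_atTop.comp (tendsto_log_ratio_atBot_of_neg hε)
end
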